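/- Sharp two-sided bounds for the relative momentum (inequality (2.65)): For all p, q ∈ ℝ³, with p⁰ := √(1+|p|²), q⁰ := √(1+|q|²), and g := √(2(p⁰q⁰ − p·q − 1)), one has √(|p−q|² + |p×q|²)/√(p⁰q⁰) ≤ g ≤ |p−q|. -/

import Mathlib

open scoped InnerProductSpace

noncomputable section

/-- Momentum space ℝ³ with the Euclidean structure. -/
abbrev E3 : Type := EuclideanSpace ℝ (Fin 3)

/-- The relativistic energy `p⁰ = √(1+|p|²)`. -/
def en (p : E3) : ℝ := Real.sqrt (1 + ‖p‖ ^ 2)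

/-- The relative momentum `g(p,q) = √(2(p⁰q⁰ − p·q − 1))`. -/
def relg (p q : E3) : ℝ := Real.sqrt (2 * (en p * en q - ⟪p, q⟫_ℝ - 1))

/-- `s = g² + 4`. -/
def srel (p q : E3) : ℝ := relg p q ^ 2 + 4

/-- The post-collisional momentum `p'` in the center-of-momentum parametrization. -/
def pPost (p q ω : E3) : E3 :=
  (2 : ℝ)⁻¹ • (p + q) + (relg p q / 2) •
    (ω + (((en p + en q) / Real.sqrt (srel p q) - 1) *
      (⟪p + q, ω⟫_ℝ / ‖p + q‖ ^ 2)) • (p + q))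

/-- The post-collisional momentum `q' = p + q − p'`. -/
def qPost (p q ω : E3) : E3 := p + q - pPost p q ω

/-- The cosine of the scattering angle. -/
def cosTheta (p q ω : E3) : ℝ :=
  (-((en p - en q) * (en (pPost p q ω) - en (qPost p q ω))) +
    ⟪p - q, pPost p q ω - qPost p q ω⟫_ℝ) / relg p q ^ 2

/-- The cross product on ℝ³ (transported to the Euclidean space structure). -/
def cross3 (p q : E3) : E3 :=
  (EuclideanSpace.equiv (Fin 3) ℝ).symm
    (crossProduct ((EuclideanSpace.equiv (Fin 3) ℝ) p) ((EuclideanSpace.equiv (Fin 3) ℝ) q))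

/-!
Write `a = p⁰q⁰` and `b = p·q`, so that `g² = 2(a - b - 1)`. Both bounds come from exact
identities with a square as remainder: `|p - q|² = g² + (p⁰ - q⁰)²`, and, by Lagrange's identity
`|p × q|² = |p|²|q|² - b²`, `|p - q|² + |p × q|² = a² - (1 + b)²`, whence
`g² a = |p - q|² + |p × q|² + (a - b - 1)²`.
-/

open Matrix WithLp

theorem norm_cross3_sq (p q : E3) : ‖cross3 p q‖ ^ 2 = ‖p‖ ^ 2 * ‖q‖ ^ 2 - ⟪p, q⟫_ℝ ^ 2 := by
  rw [show cross3 p q = toLp 2 (ofLp p ⨯₃ ofLp q) from rfl]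
  simp_rw [norm_sq_eq_re_inner (𝕜 := ℝ), EuclideanSpace.inner_eq_star_dotProduct,
    star_trivial, RCLike.re_to_real, cross_dot_cross, dotProduct_comm (ofLp q) (ofLp p), sq]

theorem en_sq (p : E3) : en p ^ 2 = 1 + ‖p‖ ^ 2 :=
  Real.sq_sqrt (by positivity)

theorem one_le_en (p : E3) : 1 ≤ en p :=
  Real.one_le_sqrt.2 (le_add_of_nonneg_right (sq_nonneg _))

theorem one_le_en_mul_en (p q : E3) : 1 ≤ en p * en q :=
  one_le_mul_of_one_le_of_one_le (one_le_en p) (one_le_en q)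

theorem inner_add_one_le_en_mul_en (p q : E3) : ⟪p, q⟫_ℝ + 1 ≤ en p * en q := by
  have h_sq : (‖p‖ * ‖q‖ + 1) ^ 2 ≤ (en p * en q) ^ 2 := by
    rw [mul_pow, en_sq, en_sq]
    nlinarith [sq_nonneg (‖p‖ - ‖q‖)]
  calc ⟪p, q⟫_ℝ + 1 ≤ ‖p‖ * ‖q‖ + 1 := by gcongr; exact real_inner_le_norm p q
    _ ≤ en p * en q :=
      (pow_le_pow_iff_left₀ (by positivity) (by linarith [one_le_en_mul_en p q]) two_ne_zero).1 h_sq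

theorem relg_sq (p q : E3) : relg p q ^ 2 = 2 * (en p * en q - ⟪p, q⟫_ℝ - 1) :=
  Real.sq_sqrt (by linarith [inner_add_one_le_en_mul_en p q])

theorem norm_sub_sq_eq_relg_sq_add (p q : E3) :
    ‖p - q‖ ^ 2 = relg p q ^ 2 + (en p - en q) ^ 2 := by
  rw [norm_sub_sq_real, relg_sq]
  linear_combination (en_sq p).symm + (en_sq q).symm

theorem relg_sq_mul_en_mul_en (p q : E3) :
    relg p q ^ 2 * (en p * en q) =
      ‖p - q‖ ^ 2 + ‖cross3 p q‖ ^ 2 + (en p * en q - ⟪p, q⟫_ℝ - 1) ^ 2 := by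
  rw [norm_sub_sq_real, norm_cross3_sq, relg_sq]
  linear_combination en q ^ 2 * en_sq p + (1 + ‖p‖ ^ 2) * en_sq q

/-- **Sharp two-sided bounds for the relative momentum** (inequality (2.65)). -/
theorem relg_two_sided_bounds (p q : E3) :
    Real.sqrt (‖p - q‖ ^ 2 + ‖cross3 p q‖ ^ 2) / Real.sqrt (en p * en q) ≤ relg p q ∧
      relg p q ≤ ‖p - q‖ := by
  have hg : 0 ≤ relg p q := Real.sqrt_nonneg _
  have ha : 0 < en p * en q := by linarith [one_le_en_mul_en p q]
  constructor
  · rw [div_le_iff₀ (Real.sqrt_pos.2 ha), Real.sqrt_le_left (by positivity), mul_pow,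
      Real.sq_sqrt ha.le, relg_sq_mul_en_mul_en]
    exact le_add_of_nonneg_right (sq_nonneg _)
  · refine (pow_le_pow_iff_left₀ hg (norm_nonneg _) two_ne_zero).1 ?_
    rw [norm_sub_sq_eq_relg_sq_add]
    exact le_add_of_nonneg_right (sq_nonneg _)
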